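/- Let I ⊂ S be a strongly stable ideal with all generators x^a satisfying ν(x^a) ≤ n, and set l := ν(I) = max{ν(m) : m ∈ G(I)}. If x^a ∈ G(I) with ν(x^a) = l, then m^{â} is an irreducible component of I, where â = (a_1+1, a_2+1, ..., a_{l−1}+1, a_l). Conversely, if m^b is an irreducible component of I of height l with b ∈ (Z_{>0})^l, then x^{b~} ∈ G(I), where b~ = (b_1−1, ..., b_{l−1}−1, b_l). -/

import Mathlib

open MvPolynomial Classical

noncomputable section

/-- The monomial `x^a` with coefficient `1`. -/
def mon {σ : Type*} (k : Type*) [Field k] (a : σ →₀ ℕ) : MvPolynomial σ k :=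
  MvPolynomial.monomial a 1

/-- `x^a` for an exponent vector given as a function on a finite type. -/
def monF {σ : Type*} [Fintype σ] (k : Type*) [Field k] (a : σ → ℕ) : MvPolynomial σ k :=
  mon k (Finsupp.equivFunOnFinite.symm a)

/-- A monomial ideal: an ideal generated by monomials. -/
def IsMonomialIdeal {σ : Type*} [Fintype σ] {k : Type*} [Field k]
    (I : Ideal (MvPolynomial σ k)) : Prop :=
  ∃ A : Set (σ → ℕ), I = Ideal.span ((monF k) '' A)

/-- The set `G(I)` of (exponent vectors of) minimal monomial generators of a monomial
ideal `I`: monomials in `I` such that dividing by any variable leaves `I`. -/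
def minGens {σ : Type*} [Fintype σ] {k : Type*} [Field k]
    (I : Ideal (MvPolynomial σ k)) : Set (σ → ℕ) :=
  {a | monF k a ∈ I ∧ ∀ i : σ, 0 < a i → monF k (a - Pi.single i 1) ∉ I}

/-- The total degree `|a|` of an exponent vector. -/
def degV {σ : Type*} [Fintype σ] (a : σ → ℕ) : ℕ := ∑ i, a i

/-- A strongly stable (monomial) ideal in `k[x_1, …, x_n]`. -/
def StronglyStable {n : ℕ} {k : Type*} [Field k]
    (I : Ideal (MvPolynomial (Fin n) k)) : Prop :=
  IsMonomialIdeal I ∧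
    ∀ a ∈ minGens I, ∀ i j : Fin n, j < i → 0 < a i →
      monF k (a - Pi.single i 1 + Pi.single j 1) ∈ I

/-- All minimal generators of `I` have degree at most `d`. -/
def GensDegLE {σ : Type*} [Fintype σ] {k : Type*} [Field k]
    (I : Ideal (MvPolynomial σ k)) (d : ℕ) : Prop :=
  ∀ a ∈ minGens I, degV a ≤ d

/-- `psum a i = a_1 + ⋯ + a_{i-1}` (the partial sum over indices `< i`). -/
def psum {n : ℕ} (a : Fin n → ℕ) (i : Fin n) : ℕ :=
  ∑ j ∈ Finset.univ.filter (fun j => j < i), a j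

/-- The exponent vector of the alternative polarization `b-pol(x^a)`:
`b-pol(x^a) = ∏_{1 ≤ i ≤ n, b_{i-1}+1 ≤ j ≤ b_i} x_{i,j}` where `b_i = a_1 + ⋯ + a_i`. -/
def bpolExp {n : ℕ} (d : ℕ) (a : Fin n → ℕ) : Fin n × Fin d → ℕ := fun p =>
  if psum a p.1 ≤ (p.2 : ℕ) ∧ (p.2 : ℕ) < psum a p.1 + a p.1 then 1 else 0

/-- The alternative polarization `b-pol(I) ⊆ k[x_{i,j}]` of a monomial ideal `I`. -/
def bpolIdeal {n : ℕ} (d : ℕ) {k : Type*} [Field k]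
    (I : Ideal (MvPolynomial (Fin n) k)) : Ideal (MvPolynomial (Fin n × Fin d) k) :=
  Ideal.span {q | ∃ a ∈ minGens I, q = monF k (bpolExp d a)}

/-- The prime monomial ideal `(x_i : i ∈ F)`. -/
def varIdeal {σ : Type*} (k : Type*) [Field k] (F : Set σ) : Ideal (MvPolynomial σ k) :=
  Ideal.span (MvPolynomial.X '' F)

/-- `F` gives an irreducible component `(x_i : i ∈ F)` of the squarefree monomial ideal `J`,
i.e. `F` is minimal among subsets with `J ⊆ (x_i : i ∈ F)`. -/
def IsIrredCompSF {σ : Type*} {k : Type*} [Field k]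
    (J : Ideal (MvPolynomial σ k)) (F : Set σ) : Prop :=
  J ≤ varIdeal k F ∧ ∀ F' ⊆ F, J ≤ varIdeal k F' → F' = F

/-- The Alexander dual of a squarefree monomial ideal: the ideal generated by the
monomials `∏_{i ∈ F} x_i` over the irreducible components `(x_i : i ∈ F)` of `J`. -/
def adual {σ : Type*} [Fintype σ] {k : Type*} [Field k]
    (J : Ideal (MvPolynomial σ k)) : Ideal (MvPolynomial σ k) :=
  Ideal.span {q | ∃ F : Set σ, IsIrredCompSF J F ∧
    q = monF k (fun i => if i ∈ F then 1 else 0)}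

/-- Transpose `x_{i,j} ↦ y_{j,i}` of an ideal of `k[x_{i,j}]`. -/
def transposeIdeal {n d : ℕ} {k : Type*} [Field k]
    (J : Ideal (MvPolynomial (Fin n × Fin d) k)) : Ideal (MvPolynomial (Fin d × Fin n) k) :=
  Ideal.map (MvPolynomial.rename (Prod.swap : Fin n × Fin d → Fin d × Fin n)
    : MvPolynomial (Fin n × Fin d) k →ₐ[k] MvPolynomial (Fin d × Fin n) k) J

end

noncomputable section

/-- `Q` is an irreducible component of the monomial ideal `I`: `Q` occurs in the (unique)
irredundant irreducible decomposition of `I`, equivalently `I = Q ∩ J` for some ideal `J`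
not contained in `Q`. -/
def IsComponentOf {n : ℕ} {k : Type*} [Field k]
    (Q I : Ideal (MvPolynomial (Fin n) k)) : Prop :=
  ∃ J : Ideal (MvPolynomial (Fin n) k), I = Q ⊓ J ∧ ¬ J ≤ Q

/-!
Let `x^a ∈ G(I)` with `ν(x^a) = l` and put `w = a - e_l`. Minimality of `x^a` gives `x^w ∉ I`,
hence every generator of `I` (which only involves `x_1, …, x_l`) lies in `𝔪^{w+1}`. Strong
stability moves the factor `x_l` of `x^a = x^w x_l` to any `x_i`, `i ≤ l`, so `x^w 𝔪 ⊆ I`;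
since `(𝔪^{w+1} : x^w) = 𝔪`, this gives `I = 𝔪^{w+1} ∩ (I + (x^w))`.

Conversely, let `I = 𝔪^b ∩ J` with `J ⊄ 𝔪^b`. Pick `f ∈ J \ 𝔪^b` and a monomial `x^c` of `f`
outside `𝔪^b` with `c_l` minimal. For `u = b - 1 + e_l - c` (truncated at `0`), `x^u f` lies in
`𝔪^b ∩ J = I` and has a monomial agreeing with `x^{b-1} x_l` in `x_1, …, x_l`, so
`x^{b-1} x_l ∈ I`. As `x^{b-1} ∉ 𝔪^b ⊇ I`, strong stability shows that no `x^{b-1} x_l / x_i`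
lies in `I` either, i.e. `x^{b-1} x_l` is a minimal generator.
-/

section MonomialIdeal

variable {σ : Type*} [Fintype σ] {k : Type*} [Field k]

lemma monF_add (u v : σ → ℕ) : monF k (u + v) = monF k u * monF k v := by
  rw [monF, monF, monF, mon, mon, mon, monomial_mul, one_mul]
  congr 2
  ext; simp

lemma support_monF_mul (u : σ → ℕ) (p : MvPolynomial σ k) :
    (monF k u * p).support =
      p.support.map (addLeftEmbedding (Finsupp.equivFunOnFinite.symm u)) :=
  AddMonoidAlgebra.support_coeff_single_mul p _ (by simp) _

lemma monF_mem_of_le {I : Ideal (MvPolynomial σ k)} {g c : σ → ℕ} (hg : monF k g ∈ I)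
    (hgc : g ≤ c) : monF k c ∈ I := by
  rw [← tsub_add_cancel_of_le hgc, monF_add]
  exact I.mul_mem_left _ hg

lemma span_monF_image (A : Set (σ → ℕ)) :
    Ideal.span (monF k '' A) =
      Ideal.span ((fun s => monomial s (1 : k)) '' (Finsupp.equivFunOnFinite.symm '' A)) := by
  rw [Set.image_image]; rfl

lemma mem_span_monF_image_iff {A : Set (σ → ℕ)} {p : MvPolynomial σ k} :
    p ∈ Ideal.span (monF k '' A) ↔ ∀ c ∈ p.support, ∃ a ∈ A, a ≤ ⇑c := by
  simp only [span_monF_image, mem_ideal_span_monomial_image, Set.exists_mem_image,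
    ← Finsupp.coe_le_coe, Finsupp.coe_equivFunOnFinite_symm]

lemma monF_mem_span_monF_image_iff {A : Set (σ → ℕ)} {c : σ → ℕ} :
    monF k c ∈ Ideal.span (monF k '' A) ↔ ∃ a ∈ A, a ≤ c := by
  simp [mem_span_monF_image_iff, monF, mon, support_monomial]

lemma IsMonomialIdeal.mem_iff {I : Ideal (MvPolynomial σ k)} (hI : IsMonomialIdeal I)
    {p : MvPolynomial σ k} : p ∈ I ↔ ∀ c ∈ p.support, monF k ⇑c ∈ I := by
  obtain ⟨A, rfl⟩ := hI
  rw [mem_span_monF_image_iff]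
  simp only [monF_mem_span_monF_image_iff]

lemma IsMonomialIdeal.monF_mul_mem_iff {I : Ideal (MvPolynomial σ k)} (hI : IsMonomialIdeal I)
    {u : σ → ℕ} {p : MvPolynomial σ k} :
    monF k u * p ∈ I ↔ ∀ c ∈ p.support, monF k (u + ⇑c) ∈ I := by
  rw [hI.mem_iff, support_monF_mul, Finset.forall_mem_map]
  simp only [addLeftEmbedding_apply, Finsupp.coe_add, Finsupp.coe_equivFunOnFinite_symm]

lemma mem_minGens_iff [DecidableEq σ] {I : Ideal (MvPolynomial σ k)} {a : σ → ℕ} :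
    a ∈ minGens I ↔ monF k a ∈ I ∧ ∀ i, 0 < a i → monF k (a - Pi.single i 1) ∉ I := by
  rw [minGens, Set.mem_ofPred_eq]
  congr!

lemma exists_minGens_le {I : Ideal (MvPolynomial σ k)} {c : σ → ℕ} (hc : monF k c ∈ I) :
    ∃ g ∈ minGens I, g ≤ c := by
  induction hN : degV c using Nat.strong_induction_on generalizing c with
  | _ N ih =>
    by_cases hmin : c ∈ minGens I
    · exact ⟨c, hmin, le_rfl⟩
    obtain ⟨i, hi, hci⟩ : ∃ i, 0 < c i ∧ monF k (c - Pi.single i 1) ∈ I := by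
      simpa [minGens, hc] using hmin
    have hdeg : degV (c - Pi.single i 1) < N := by
      subst hN
      exact Finset.sum_lt_sum (fun j _ => Nat.sub_le _ _)
        ⟨i, Finset.mem_univ i, by simp only [Pi.sub_apply, Pi.single_eq_same]; omega⟩
    obtain ⟨g, hg, hgc⟩ := ih _ hdeg hci rfl
    exact ⟨g, hg, hgc.trans tsub_le_self⟩

end MonomialIdeal

lemma Pi.single_le_iff {ι M : Type*} [DecidableEq ι] [AddCommMonoid M] [PartialOrder M]
    [CanonicallyOrderedAdd M] {i : ι} {x : M} {c : ι → M} : Pi.single i x ≤ c ↔ x ≤ c i :=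
  ⟨fun h => by simpa using h i,
    fun h j => by rcases eq_or_ne j i with rfl | hj <;> simp [*]⟩

section VarPowIdeal

variable {σ : Type*} [Fintype σ] {k : Type*} [Field k]

/-- The paper's `𝔪^v = (x_i^{v_i} : P i)`. -/
def varPowIdeal [DecidableEq σ] (k : Type*) [Field k] (P : σ → Prop) (v : σ → ℕ) :
    Ideal (MvPolynomial σ k) :=
  Ideal.span {q | ∃ i, P i ∧ q = monF k (Pi.single i (v i))}

variable [DecidableEq σ] {P : σ → Prop} {v : σ → ℕ}

lemma varPowIdeal_eq_span_monF_image :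
    varPowIdeal k P v = Ideal.span (monF k '' ((fun i => Pi.single i (v i)) '' {i | P i})) := by
  rw [varPowIdeal, Set.image_image]
  congr 1
  ext q
  simp [eq_comm]

lemma isMonomialIdeal_varPowIdeal : IsMonomialIdeal (varPowIdeal k P v) :=
  ⟨_, varPowIdeal_eq_span_monF_image⟩

lemma monF_mem_varPowIdeal_iff {c : σ → ℕ} :
    monF k c ∈ varPowIdeal k P v ↔ ∃ i, P i ∧ v i ≤ c i := by
  simp [varPowIdeal_eq_span_monF_image, monF_mem_span_monF_image_iff, Pi.single_le_iff]

end VarPowIdeal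

section Components

variable {σ : Type*} [Fintype σ] [DecidableEq σ] {k : Type*} [Field k] {P : σ → Prop}
  {I : Ideal (MvPolynomial σ k)}

lemma le_varPowIdeal_add_one (hI : IsMonomialIdeal I)
    (hgen : ∀ g ∈ minGens I, ∀ i, ¬ P i → g i = 0) {w : σ → ℕ} (hw : monF k w ∉ I) :
    I ≤ varPowIdeal k P (w + 1) := by
  intro p hp
  rw [isMonomialIdeal_varPowIdeal.mem_iff]
  intro c hc
  obtain ⟨g, hg, hgc⟩ := exists_minGens_le (hI.mem_iff.1 hp c hc)
  rw [monF_mem_varPowIdeal_iff]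
  by_contra! hcw
  refine hw (monF_mem_of_le hg.1 fun i => ?_)
  by_cases hi : P i
  · have := hcw i hi
    have := hgc i
    simp only [Pi.add_apply, Pi.one_apply] at *
    omega
  · simp [hgen g hg i hi]

/-- `(𝔪^{w+1} : x^w)` is generated by the variables `x_i` with `P i`. -/
lemma monF_mul_mem_of_monF_mul_mem_varPowIdeal (hI : IsMonomialIdeal I) {w : σ → ℕ}
    (hw : ∀ i, P i → monF k (w + Pi.single i 1) ∈ I) {p : MvPolynomial σ k}
    (hp : monF k w * p ∈ varPowIdeal k P (w + 1)) : monF k w * p ∈ I := by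
  rw [hI.monF_mul_mem_iff]
  intro c hc
  obtain ⟨i, hi, hic⟩ := monF_mem_varPowIdeal_iff.1
    (isMonomialIdeal_varPowIdeal.monF_mul_mem_iff.1 hp c hc)
  refine monF_mem_of_le (hw i hi) fun j => ?_
  simp only [Pi.add_apply, Pi.one_apply, Pi.single_apply] at hic ⊢
  split_ifs with hji
  · subst hji; omega
  · omega

/-- Take for `c` a monomial of `f` outside `𝔪^b` with `c j` minimal. -/
lemma exists_mem_support_monF_mul_mem_varPowIdeal {b : σ → ℕ} {f : MvPolynomial σ k}
    (hf : f ∉ varPowIdeal k P b) {j : σ} (hj : P j) :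
    ∃ c ∈ f.support, (∀ i, P i → c i < b i) ∧
      ∀ u : σ → ℕ, b j ≤ u j + c j → monF k u * f ∈ varPowIdeal k P b := by
  set T := f.support.filter fun c => ∀ i, P i → c i < b i
  have hT : T.Nonempty := by
    by_contra hT
    refine hf (isMonomialIdeal_varPowIdeal.mem_iff.2 fun c hc => ?_)
    rw [monF_mem_varPowIdeal_iff]
    by_contra! hcb
    exact hT ⟨c, Finset.mem_filter.2 ⟨hc, hcb⟩⟩
  obtain ⟨c, hcT, hmin⟩ := T.exists_min_image (fun c => c j) hT
  obtain ⟨hc, hcb⟩ := Finset.mem_filter.1 hcT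
  refine ⟨c, hc, hcb, fun u hu => ?_⟩
  rw [isMonomialIdeal_varPowIdeal.monF_mul_mem_iff]
  intro d hd
  rw [monF_mem_varPowIdeal_iff]
  by_cases hdb : ∀ i, P i → d i < b i
  · have := hmin d (Finset.mem_filter.2 ⟨hd, hdb⟩)
    exact ⟨j, hj, by simp only [Pi.add_apply]; omega⟩
  · push Not at hdb
    obtain ⟨i, hi, hbi⟩ := hdb
    exact ⟨i, hi, by simp only [Pi.add_apply]; omega⟩

lemma monF_add_single_mem_of_eq_varPowIdeal_inf [DecidablePred P] (hI : IsMonomialIdeal I)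
    (hgen : ∀ g ∈ minGens I, ∀ i, ¬ P i → g i = 0) {b : σ → ℕ} {J : Ideal (MvPolynomial σ k)}
    (hIJ : I = varPowIdeal k P b ⊓ J) (hJ : ¬ J ≤ varPowIdeal k P b) {j : σ} (hj : P j)
    (hbj : 0 < b j) :
    monF k ((fun i => if P i then b i - 1 else 0) + Pi.single j 1) ∈ I := by
  set t := (fun i => if P i then b i - 1 else 0) + Pi.single j 1
  obtain ⟨f, hfJ, hfQ⟩ := SetLike.not_le_iff_exists.1 hJ
  obtain ⟨c, hc, hcb, hmul⟩ := exists_mem_support_monF_mul_mem_varPowIdeal hfQ hj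
  have hufI : monF k (t - ⇑c) * f ∈ I := by
    rw [hIJ]
    refine ⟨hmul _ ?_, J.mul_mem_left _ hfJ⟩
    simp only [t, Pi.sub_apply, Pi.add_apply, Pi.single_eq_same, if_pos hj]
    omega
  obtain ⟨g, hg, hgc⟩ := exists_minGens_le (hI.monF_mul_mem_iff.1 hufI c hc)
  refine monF_mem_of_le hg.1 fun i => ?_
  by_cases hi : P i
  · have := hgc i
    have := hcb i hi
    simp only [t, Pi.sub_apply, Pi.add_apply, if_pos hi] at *
    omega
  · simp [hgen g hg i hi]

end Components

section StronglyStable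

variable {n : ℕ} {k : Type*} [Field k] {I : Ideal (MvPolynomial (Fin n) k)}

lemma isComponentOf_of_mul_mem {Q : Ideal (MvPolynomial (Fin n) k)} {f : MvPolynomial (Fin n) k}
    (hIQ : I ≤ Q) (hf : f ∉ Q) (hmul : ∀ p, f * p ∈ Q → f * p ∈ I) : IsComponentOf Q I := by
  refine ⟨I ⊔ Ideal.span {f}, ?_,
    fun h => hf (h (Ideal.mem_sup_right (Ideal.mem_span_singleton_self f)))⟩
  rw [inf_comm, sup_inf_assoc_of_le _ hIQ, left_eq_sup]
  rintro _ ⟨hfp, hpQ⟩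
  obtain ⟨p, rfl⟩ := Ideal.mem_span_singleton.1 hfp
  exact hmul p hpQ

lemma StronglyStable.monF_add_single_mem_of_le (hI : StronglyStable I) {c : Fin n → ℕ}
    {i j : Fin n} (hji : j ≤ i) (hc : monF k (c + Pi.single i 1) ∈ I) :
    monF k (c + Pi.single j 1) ∈ I := by
  rcases hji.eq_or_lt with rfl | hji
  · exact hc
  obtain ⟨g, hg, hgc⟩ := exists_minGens_le hc
  by_cases hgi : g i ≤ c i
  · refine monF_mem_of_le hg.1 fun m => ?_
    have := hgc m
    simp only [Pi.add_apply, Pi.single_apply] at *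
    split_ifs at * <;> subst_vars <;> omega
  · have hgi' : 0 < g i := by omega
    refine monF_mem_of_le (hI.2 g hg i j hji hgi') fun m => ?_
    have := hgc m
    simp only [Pi.add_apply, Pi.sub_apply, Pi.single_apply] at *
    split_ifs at * <;> subst_vars <;> omega

lemma StronglyStable.add_single_mem_minGens (hI : StronglyStable I) {w : Fin n → ℕ} {L : Fin n}
    (hw : monF k w ∉ I) (hwL : monF k (w + Pi.single L 1) ∈ I) (hsupp : ∀ i, L < i → w i = 0) :
    w + Pi.single L 1 ∈ minGens I := by
  refine mem_minGens_iff.2 ⟨hwL, fun i hi hmem => ?_⟩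
  rcases lt_trichotomy i L with hiL | rfl | hLi
  · have hwi : 0 < w i := by simpa [Pi.single_apply, hiL.ne] using hi
    have hrw : w + Pi.single L 1 - Pi.single i 1 = (w - Pi.single i 1) + Pi.single L 1 := by
      ext m
      simp only [Pi.add_apply, Pi.sub_apply, Pi.single_apply]
      split_ifs <;> subst_vars <;> omega
    have hw' : w - Pi.single i 1 + Pi.single i 1 = w := by
      ext m
      simp only [Pi.add_apply, Pi.sub_apply, Pi.single_apply]
      split_ifs <;> subst_vars <;> omega
    rw [hrw] at hmem
    exact hw (hw' ▸ hI.monF_add_single_mem_of_le hiL.le hmem)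
  · exact hw (by simpa using hmem)
  · simp [hLi.ne', hsupp i hLi] at hi

variable {P : Fin n → Prop} {L : Fin n}

lemma StronglyStable.isComponentOf_varPowIdeal (hI : StronglyStable I) (hP : ∀ i, P i → i ≤ L)
    (hgen : ∀ g ∈ minGens I, ∀ i, ¬ P i → g i = 0) {a : Fin n → ℕ} (ha : a ∈ minGens I)
    (haL : 0 < a L) : IsComponentOf (varPowIdeal k P (a - Pi.single L 1 + 1)) I := by
  set w := a - Pi.single L 1
  have hwa : w + Pi.single L 1 = a := by
    ext i
    rcases eq_or_ne i L with rfl | hi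
    · simp [w]; omega
    · simp [w, hi]
  have hw : monF k w ∉ I := (mem_minGens_iff.1 ha).2 L haL
  refine isComponentOf_of_mul_mem (le_varPowIdeal_add_one hI.1 hgen hw)
    (by simp [monF_mem_varPowIdeal_iff]) fun p hp =>
      monF_mul_mem_of_monF_mul_mem_varPowIdeal hI.1 (fun i hi => ?_) hp
  exact hI.monF_add_single_mem_of_le (hP i hi) (hwa ▸ ha.1)

lemma StronglyStable.add_single_mem_minGens_of_isComponentOf [DecidablePred P]
    (hI : StronglyStable I) (hPL : P L) (hP : ∀ i, P i → i ≤ L)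
    (hgen : ∀ g ∈ minGens I, ∀ i, ¬ P i → g i = 0) {b : Fin n → ℕ} (hb : ∀ i, P i → 0 < b i)
    (hQ : IsComponentOf (varPowIdeal k P b) I) :
    (fun i => if P i then b i - 1 else 0) + Pi.single L 1 ∈ minGens I := by
  obtain ⟨J, hIJ, hJ⟩ := hQ
  refine hI.add_single_mem_minGens (fun h => ?_)
    (monF_add_single_mem_of_eq_varPowIdeal_inf hI.1 hgen hIJ hJ hPL (hb L hPL))
    fun i hLi => if_neg fun hi => (hP i hi).not_gt hLi
  obtain ⟨i, hi, hbi⟩ := monF_mem_varPowIdeal_iff.1 (hIJ ▸ h).1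
  have := hb i hi
  simp only [if_pos hi] at hbi
  omega

end StronglyStable

/-- Let `I ⊆ S` be a strongly stable ideal and `l = ν(I)`.  For
`x^a ∈ G(I)` with `ν(x^a) = l`, the ideal `𝔪^{â} = (x_1^{a_1+1}, …, x_{l-1}^{a_{l-1}+1},
x_l^{a_l})` is an irreducible component of `I`.  Conversely, if `𝔪^b` is an irreducible
component of `I` of height `l`, then `x^{b̃} ∈ G(I)` where
`b̃ = (b_1-1, …, b_{l-1}-1, b_l)`. -/
theorem component_of_top_generators {n : ℕ} {k : Type*} [Field k]
    (I : Ideal (MvPolynomial (Fin n) k)) (hss : StronglyStable I)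
    (l : ℕ) (hl0 : 0 < l) (hln : l ≤ n)
    (hnu : ∀ a ∈ minGens I, ∀ i : Fin n, 0 < a i → (i : ℕ) < l) :
    (∀ a ∈ minGens I, 0 < a ⟨l - 1, by omega⟩ →
      IsComponentOf
        (Ideal.span {q | ∃ i : Fin n, (i : ℕ) < l ∧
          q = monF k (Pi.single i (if (i : ℕ) + 1 = l then a i else a i + 1))}) I) ∧
    (∀ b : Fin n → ℕ, (∀ i : Fin n, (i : ℕ) < l → 0 < b i) →
      IsComponentOf
        (Ideal.span {q | ∃ i : Fin n, (i : ℕ) < l ∧ q = monF k (Pi.single i (b i))}) I →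
      (fun i : Fin n =>
        if (i : ℕ) + 1 = l then b i else if (i : ℕ) < l then b i - 1 else 0) ∈
        minGens I) := by
  set P : Fin n → Prop := fun i => (i : ℕ) < l
  set L : Fin n := ⟨l - 1, by omega⟩
  have hL : ∀ i : Fin n, (i : ℕ) + 1 = l ↔ i = L := fun i => by simp only [L, Fin.ext_iff]; omega
  have hPL : P L := by simp only [P, L]; omega
  have hP : ∀ i, P i → i ≤ L := fun i hi => Fin.le_def.2 (by simp only [P, L] at *; omega)
  have hgen : ∀ g ∈ minGens I, ∀ i, ¬ P i → g i = 0 := fun g hg i hi =>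
    Nat.eq_zero_of_not_pos fun h => hi (hnu g hg i h)
  refine ⟨fun a ha haL => ?_, fun b hb hQ => ?_⟩
  · have hexp : (fun i : Fin n => if (i : ℕ) + 1 = l then a i else a i + 1) =
        a - Pi.single L 1 + 1 := by
      ext i
      rcases eq_or_ne i L with rfl | hi
      · simp [hL]; omega
      · simp [hL, hi]
    change IsComponentOf (varPowIdeal k P _) I
    rw [hexp]
    exact hss.isComponentOf_varPowIdeal hP hgen ha haL
  · have hexp : (fun i : Fin n =>
        if (i : ℕ) + 1 = l then b i else if (i : ℕ) < l then b i - 1 else 0) =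
        (fun i => if P i then b i - 1 else 0) + Pi.single L 1 := by
      ext i
      rcases eq_or_ne i L with rfl | hi
      · simp [hL, hPL]; have := hb L hPL; omega
      · simp [hL, hi, P]
    rw [hexp]
    exact hss.add_single_mem_minGens_of_isComponentOf hPL hP hgen hb hQ

end
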